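/- Let A(x) = A_0 + Σ_{l=1}^M x_l A_l, where A_0, A_1, …, A_M are real symmetric N × N matrices, and suppose that A(x) and A(y) commute for all x, y ∈ ℝ^M. Then for every vector a ∈ ℝ^N, the function f : ℝ^M → ℝ defined by f(x) = a^T e^{A(x)} a is convex on ℝ^M. -/

import Mathlib

/-!
On the segment `t ↦ X + t • C`, `C = Y - X`, between two commuting symmetric matrices, the
second derivative of `t ↦ aᵀ e^{X + tC} a` is `aᵀ e^{X + tC} C² a = ‖C e^{(X + tC)/2} a‖² ≥ 0`.
Hence `X ↦ aᵀ e^X a` is convex on every convex set of pairwise commuting symmetric matrices,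
such as the range of the affine map `x ↦ A(x)`.
-/

open Matrix NormedSpace Set

namespace Matrix

variable {n : Type*} [Fintype n]

section

open scoped Norms.Operator

theorem _root_.HasDerivAt.dotProduct_mulVec {M : ℝ → Matrix n n ℝ} {M' : Matrix n n ℝ} {t : ℝ}
    (hM : HasDerivAt M M' t) (a b : n → ℝ) :
    HasDerivAt (fun u => a ⬝ᵥ M u *ᵥ b) (a ⬝ᵥ M' *ᵥ b) t :=
  let φ : Matrix n n ℝ →ₗ[ℝ] ℝ :=
    { toFun := fun X => a ⬝ᵥ X *ᵥ b
      map_add' := fun X Y => by simp [add_mulVec]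
      map_smul' := fun c X => by simp [smul_mulVec, dotProduct_smul] }
  (LinearMap.toContinuousLinearMap φ).hasFDerivAt.comp_hasDerivAt t hM

end

variable [DecidableEq n]

theorem IsSymm.dotProduct_exp_mul_mul_self_mulVec_nonneg {X C : Matrix n n ℝ}
    (hX : X.IsSymm) (hC : C.IsSymm) (h : Commute X C) (a : n → ℝ) :
    0 ≤ a ⬝ᵥ (NormedSpace.exp X * C * C) *ᵥ a := by
  set S := NormedSpace.exp ((2⁻¹ : ℝ) • X)
  have hS : Sᵀ = S := (hX.smul _).exp
  have hSC : Commute S C := (h.smul_left _).exp_left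
  have hSS : S * S = NormedSpace.exp X := by
    rw [← Matrix.exp_add_of_commute _ _ (Commute.refl _), ← add_smul]
    norm_num
  have hgram : NormedSpace.exp X * C * C = (C * S)ᴴ * (C * S) := by
    rw [conjTranspose_eq_transpose_of_trivial, transpose_mul, hS, hC.eq, ← hSS]
    simp only [mul_assoc, hSC.symm.eq]
    rw [← mul_assoc C S C, hSC.symm.eq, mul_assoc]
  simpa [hgram] using (posSemidef_conjTranspose_mul_self (C * S)).dotProduct_mulVec_nonneg a

section

open scoped Norms.Operator

theorem hasDerivAt_exp_add_smul {B C : Matrix n n ℝ} (h : Commute B C) (t : ℝ) :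
    HasDerivAt (fun u : ℝ => exp (B + u • C)) (exp (B + t • C) * C) t := by
  have hsplit (u : ℝ) : exp (B + u • C) = exp B * exp (u • C) :=
    Matrix.exp_add_of_commute _ _ (h.smul_right u)
  simp only [hsplit, mul_assoc]
  exact (hasDerivAt_exp_smul_const C t).const_mul (exp B)

theorem convexOn_dotProduct_exp_add_smul_mulVec {B C : Matrix n n ℝ} (hB : B.IsSymm)
    (hC : C.IsSymm) (h : Commute B C) (a : n → ℝ) :
    ConvexOn ℝ univ (fun t : ℝ => a ⬝ᵥ exp (B + t • C) *ᵥ a) := by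
  have hf' (t : ℝ) := (hasDerivAt_exp_add_smul h t).dotProduct_mulVec a a
  have hf'' (t : ℝ) := ((hasDerivAt_exp_add_smul h t).mul_const C).dotProduct_mulVec a a
  refine convexOn_of_hasDerivWithinAt2_nonneg convex_univ
    (fun t _ => (hf' t).continuousAt.continuousWithinAt)
    (fun t _ => (hf' t).hasDerivWithinAt) (fun t _ => (hf'' t).hasDerivWithinAt)
    (fun t _ => ?_)
  exact (hB.add (hC.smul t)).dotProduct_exp_mul_mul_self_mulVec_nonneg hC
    (h.add_left ((Commute.refl C).smul_left t)) a

end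

theorem convexOn_dotProduct_exp_mulVec {S : Set (Matrix n n ℝ)} (hS : Convex ℝ S)
    (hsymm : ∀ X ∈ S, X.IsSymm) (hcomm : ∀ X ∈ S, ∀ Y ∈ S, Commute X Y) (a : n → ℝ) :
    ConvexOn ℝ S (fun X => a ⬝ᵥ exp X *ᵥ a) := by
  refine ⟨hS, fun X hX Y hY p q hp hq hpq => ?_⟩
  have hline := (convexOn_dotProduct_exp_add_smul_mulVec (hsymm X hX)
    ((hsymm Y hY).sub (hsymm X hX)) ((hcomm X hX Y hY).sub_right (Commute.refl X)) a).2
    (mem_univ 0) (mem_univ 1) hp hq hpq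
  obtain rfl : p = 1 - q := by linarith
  have hsegment : (1 - q) • X + q • Y = X + q • (Y - X) := by module
  simpa [hsegment] using hline

end Matrix

/-- Let `A(x) = A₀ + ∑ l, x l • A l` with all matrices symmetric, and suppose `A(x)` and `A(y)`
commute for all `x, y`. Then for every `a`, the map `x ↦ aᵀ e^{A(x)} a` is convex on `ℝ^M`. -/
theorem convexOn_quadForm_exp_affineMatrix {N M : ℕ}
    (A0 : Matrix (Fin N) (Fin N) ℝ) (Al : Fin M → Matrix (Fin N) (Fin N) ℝ)
    (hA0 : A0.IsSymm) (hAl : ∀ l, (Al l).IsSymm)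
    (hcomm : ∀ x y : Fin M → ℝ,
      Commute (A0 + ∑ l : Fin M, x l • Al l) (A0 + ∑ l : Fin M, y l • Al l))
    (a : Fin N → ℝ) :
    ConvexOn ℝ (Set.univ : Set (Fin M → ℝ))
      (fun x : Fin M → ℝ =>
        a ⬝ᵥ (NormedSpace.exp (A0 + ∑ l : Fin M, x l • Al l)).mulVec a) := by
  let A : (Fin M → ℝ) →ᵃ[ℝ] Matrix (Fin N) (Fin N) ℝ :=
    AffineMap.const ℝ _ A0 + (Fintype.linearCombination ℝ Al).toAffineMap
  have hA (x : Fin M → ℝ) : A x = A0 + ∑ l, x l • Al l := by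
    simp [A, Fintype.linearCombination_apply]
  have hsymm : ∀ X ∈ range A, X.IsSymm := by
    rintro _ ⟨x, rfl⟩
    simp only [hA, IsSymm, transpose_add, transpose_sum, transpose_smul, hA0.eq, (hAl _).eq]
  have hcommA : ∀ X ∈ range A, ∀ Y ∈ range A, Commute X Y := by
    rintro _ ⟨x, rfl⟩ _ ⟨y, rfl⟩
    simpa only [hA] using hcomm x y
  have hconvex : Convex ℝ (range A) := by
    simpa only [image_univ] using convex_univ.affine_image A
  have hconvexOn := (convexOn_dotProduct_exp_mulVec hconvex hsymm hcommA a).comp_affineMap A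
  rw [preimage_range] at hconvexOn
  simpa only [Function.comp_def, hA] using hconvexOn
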